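/- Fix real constants m, a and c ≠ 0, and let I ⊆ ℝ be a nonempty open interval such that τ > 0, τ − c > 0 and τ − 2c > 0 for every τ ∈ I. Then the function ψ(τ) = (τ−2c)^{1−a}·(τ−c)^{−m}·τ^{2m−1+a} (real powers) satisfies the homogeneous version of equation (S1) on I, i.e. τ(τ−c)²(2c−τ)ψ''(τ) + [(m−2)τ³ + c(8−5m−2a)τ² + 2c²(2a+4m−5)τ − 2c³(2m−2+a)]ψ'(τ) + mτ(τ−2c)ψ(τ) = 0 for every τ ∈ I. -/

import Mathlib

/-- ψ(τ) = (τ−2c)^{1−a}·(τ−c)^{−m}·τ^{2m−1+a}, with real powers. -/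
noncomputable def psiFun (m a c : ℝ) : ℝ → ℝ := fun τ =>
  (τ - 2*c) ^ (1 - a) * (τ - c) ^ (-m) * τ ^ (2*m - 1 + a)

/-- Logarithmic derivative of ψ. -/
noncomputable def Lfun (m a c : ℝ) : ℝ → ℝ := fun τ =>
  (1 - a)/(τ - 2*c) + (-m)/(τ - c) + (2*m - 1 + a)/τ

/-- Derivative of the logarithmic derivative. -/
noncomputable def Lfun' (m a c : ℝ) : ℝ → ℝ := fun τ =>
  -(1 - a)/(τ - 2*c)^2 + m/(τ - c)^2 - (2*m - 1 + a)/τ^2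

lemma hasDerivAt_rpow_shift (p k : ℝ) {τ : ℝ} (h : τ - k ≠ 0) :
    HasDerivAt (fun t : ℝ => (t - k) ^ p) (p * (τ - k) ^ (p - 1)) τ := by
  have := (Real.hasDerivAt_rpow_const (x := τ - k) (p := p) (Or.inl h)).comp τ
    ((hasDerivAt_id τ).sub_const k)
  simpa [Function.comp_def] using this

lemma hasDerivAt_psi (m a c : ℝ) {τ : ℝ} (h0 : 0 < τ) (h1 : 0 < τ - c) (h2 : 0 < τ - 2*c) :
    HasDerivAt (psiFun m a c) (psiFun m a c τ * Lfun m a c τ) τ := by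
  have hA := hasDerivAt_rpow_shift (1 - a) (2*c) h2.ne'
  have hB := hasDerivAt_rpow_shift (-m) c h1.ne'
  have hC : HasDerivAt (fun t : ℝ => t ^ (2*m - 1 + a))
      ((2*m - 1 + a) * τ ^ (2*m - 1 + a - 1)) τ :=
    Real.hasDerivAt_rpow_const (Or.inl h0.ne')
  have h := (hA.mul hB).mul hC
  refine h.congr_deriv (Eq.symm ?_)
  simp only [psiFun, Lfun, Pi.mul_apply]
  rw [Real.rpow_sub h2 (1 - a) 1, Real.rpow_sub h1 (-m) 1, Real.rpow_sub h0 (2*m - 1 + a) 1,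
    Real.rpow_one, Real.rpow_one, Real.rpow_one]
  field_simp

lemma hasDerivAt_L (m a c : ℝ) {τ : ℝ} (h0 : 0 < τ) (h1 : 0 < τ - c) (h2 : 0 < τ - 2*c) :
    HasDerivAt (Lfun m a c) (Lfun' m a c τ) τ := by
  have hA : HasDerivAt (fun t : ℝ => (1 - a)/(t - 2*c))
      ((0 * (τ - 2*c) - (1 - a) * 1) / (τ - 2*c)^2) τ :=
    (hasDerivAt_const τ (1 - a)).div ((hasDerivAt_id τ).sub_const (2*c)) h2.ne'
  have hB : HasDerivAt (fun t : ℝ => (-m)/(t - c))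
      ((0 * (τ - c) - (-m) * 1) / (τ - c)^2) τ :=
    (hasDerivAt_const τ (-m)).div ((hasDerivAt_id τ).sub_const c) h1.ne'
  have hC : HasDerivAt (fun t : ℝ => (2*m - 1 + a)/t)
      ((0 * τ - (2*m - 1 + a) * 1) / τ^2) τ :=
    (hasDerivAt_const τ (2*m - 1 + a)).div (hasDerivAt_id τ) h0.ne'
  have h := (hA.add hB).add hC
  refine h.congr_deriv (Eq.symm ?_)
  simp only [Lfun']
  field_simp
  ring

lemma hasDerivAt_psi' (m a c : ℝ) {τ : ℝ} (h0 : 0 < τ) (h1 : 0 < τ - c) (h2 : 0 < τ - 2*c) :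
    HasDerivAt (fun t => psiFun m a c t * Lfun m a c t)
      (psiFun m a c τ * ((Lfun m a c τ)^2 + Lfun' m a c τ)) τ := by
  have h := (hasDerivAt_psi m a c h0 h1 h2).mul (hasDerivAt_L m a c h0 h1 h2)
  refine h.congr_deriv (Eq.symm ?_)
  ring

/-- On an interval where τ, τ−c and τ−2c are positive, ψ solves the
homogeneous version of equation (S1). -/
theorem psi_solves_homogeneous_S1 (m a c : ℝ) (hc : c ≠ 0)
    (I : Set ℝ) (hIopen : IsOpen I) (hIconn : I.OrdConnected) (hIne : I.Nonempty)
    (hpos : ∀ τ ∈ I, 0 < τ ∧ 0 < τ - c ∧ 0 < τ - 2*c) :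
    ∀ τ ∈ I,
      τ*(τ-c)^2*(2*c-τ) * deriv (deriv (psiFun m a c)) τ
        + ((m-2)*τ^3 + c*(8-5*m-2*a)*τ^2 + 2*c^2*(2*a+4*m-5)*τ
            - 2*c^3*(2*m-2+a)) * deriv (psiFun m a c) τ
        + m*τ*(τ-2*c) * psiFun m a c τ = 0 := by
  intro τ hτ
  obtain ⟨h0, h1, h2⟩ := hpos τ hτ
  have hψ' : ∀ t ∈ I, deriv (psiFun m a c) t = psiFun m a c t * Lfun m a c t := by
    intro t ht
    obtain ⟨g0, g1, g2⟩ := hpos t ht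
    exact (hasDerivAt_psi m a c g0 g1 g2).deriv
  have hEq : deriv (psiFun m a c) =ᶠ[nhds τ] fun t => psiFun m a c t * Lfun m a c t := by
    filter_upwards [hIopen.mem_nhds hτ] with t ht using hψ' t ht
  have hd2 : deriv (deriv (psiFun m a c)) τ
      = psiFun m a c τ * ((Lfun m a c τ)^2 + Lfun' m a c τ) := by
    rw [hEq.deriv_eq]
    exact (hasDerivAt_psi' m a c h0 h1 h2).deriv
  rw [hd2, hψ' τ hτ]
  have key : τ*(τ-c)^2*(2*c-τ) * ((Lfun m a c τ)^2 + Lfun' m a c τ)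
      + ((m-2)*τ^3 + c*(8-5*m-2*a)*τ^2 + 2*c^2*(2*a+4*m-5)*τ
          - 2*c^3*(2*m-2+a)) * (Lfun m a c τ)
      + m*τ*(τ-2*c) = 0 := by
    simp only [Lfun, Lfun']
    field_simp [h0.ne', h1.ne', h2.ne', (by linarith : (0:ℝ) < τ - c*2).ne']
    ring
  linear_combination psiFun m a c τ * key
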